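/- Let F_H be an affine and linear invariant family of normalized sense-preserving harmonic mappings on 𝔻. Suppose there exists f_0 = h_0 + conj(g_0) ∈ F_H^0 such that for every f = h + conj(g) ∈ F_H^0 one has Re(a_2(h)) ≤ a_2(h_0) and Re(b_2(g)) ≤ b_2(g_0) (with a_2(h_0), b_2(g_0) real). Then a_2(h_0) > 1/2. -/

import Mathlib

open Complex Set

noncomputable section

/-- The open unit disk in the complex plane. -/
def unitDisk : Set ℂ := {z : ℂ | ‖z‖ < 1}

/-- The generalized Koebe function `k_a`, using the principal branch of the logarithm
(via the complex power function). -/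
def koebeFn (a : ℂ) (z : ℂ) : ℂ :=
  if a = 0 then (1 / 2) * Complex.log ((1 + z) / (1 - z))
  else (1 / (2 * a)) * (((1 + z) / (1 - z)) ^ a - 1)

/-- The lens map `l_R` (with principal-branch powers); note that this formula also
gives `l_0 ≡ 0` and `l_1 = id` on the unit disk. -/
def lensMap (R : ℝ) (z : ℂ) : ℂ :=
  (((1 + z) / (1 - z)) ^ (R : ℂ) - 1) / (((1 + z) / (1 - z)) ^ (R : ℂ) + 1)

/-- The `n`-th Taylor coefficient of `f` at `0`. -/
def coeffAt (f : ℂ → ℂ) (n : ℕ) : ℂ := iteratedDeriv n f 0 / n.factorial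

/-- A normalized sense-preserving harmonic mapping `f = h + conj g` on the unit disk,
recorded via its analytic part `h` and co-analytic part `g`. -/
structure IsNormalizedSPH (h g : ℂ → ℂ) : Prop where
  h_analytic : DifferentiableOn ℂ h unitDisk
  g_analytic : DifferentiableOn ℂ g unitDisk
  h_zero : h 0 = 0
  g_zero : g 0 = 0
  dh_zero : deriv h 0 = 1
  dh_ne : ∀ z ∈ unitDisk, deriv h z ≠ 0
  sense_preserving : ∀ z ∈ unitDisk, ‖deriv g z‖ < ‖deriv h z‖

/-- An affine and linear invariant family of normalized sense-preserving harmonic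
mappings `f = h + conj g` on the unit disk, each member recorded as the pair `(h, g)`:
the family is closed under Koebe transforms, affine changes and rotations
(each written out in terms of the canonical decomposition). -/
structure IsAffineLinearInvariantFamily (F : Set ((ℂ → ℂ) × (ℂ → ℂ))) : Prop where
  nsph : ∀ p ∈ F, IsNormalizedSPH p.1 p.2
  koebe_mem : ∀ p ∈ F, ∀ ζ ∈ unitDisk,
    ((fun z => (p.1 ((z + ζ) / (1 + (starRingEnd ℂ) ζ * z)) - p.1 ζ) /
        ((1 - ((‖ζ‖ : ℝ) : ℂ) ^ 2) * deriv p.1 ζ)),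
     (fun z => (p.2 ((z + ζ) / (1 + (starRingEnd ℂ) ζ * z)) - p.2 ζ) /
        ((1 - ((‖ζ‖ : ℝ) : ℂ) ^ 2) * (starRingEnd ℂ) (deriv p.1 ζ)))) ∈ F
  affine_mem : ∀ p ∈ F, ∀ ε ∈ unitDisk,
    ((fun z => (p.1 z - (starRingEnd ℂ) ε * p.2 z) / (1 - (starRingEnd ℂ) ε * deriv p.2 0)),
     (fun z => (p.2 z - ε * p.1 z) /
        (starRingEnd ℂ) (1 - (starRingEnd ℂ) ε * deriv p.2 0))) ∈ F
  rot_mem : ∀ p ∈ F, ∀ lam : ℂ, ‖lam‖ = 1 →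
    ((fun z => (starRingEnd ℂ) lam * p.1 (lam * z)),
     (fun z => lam * p.2 (lam * z))) ∈ F

/-!
Let `a = Re a₂(h₀)` and suppose `a ≤ 1/2`. For `f = h + conj g ∈ F_H` and `0 ≤ r < 1`, the affine
change that kills `g'(0)`, applied to the Koebe transform at `r`, lies in `F_H⁰`, and the real
part of its second coefficient is `(1 - r²) Φ'(r) / (4 Φ(r))` for the scaled Jacobian
`Φ(r) = (1 - r²)² (|h'(r)|² - |g'(r)|²)`. The rotation `z ↦ -z` negates that coefficient, so
maximality of `a` gives `(1 - r²) Φ' ≥ -4a Φ ≥ -2 Φ`. Hence `Φ(r) (1 + r) / (1 - r)` increases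
and `Φ(r) ≥ Φ(0) (1 - r) / (1 + r)`. Applied to the rotations of `f₀`, this forces
`|h₀'| ≥ 11/10` on the circle `|z| = 9/10`, against the minimum modulus principle for `h₀'`,
since `h₀'(0) = 1`.
-/

open Metric Filter Topology ComplexConjugate

lemma isOpen_unitDisk : IsOpen unitDisk := isOpen_lt continuous_norm continuous_const

lemma ofReal_mem_unitDisk {r : ℝ} (hr₀ : 0 ≤ r) (hr₁ : r < 1) : (r : ℂ) ∈ unitDisk := by
  simpa [unitDisk, abs_of_nonneg hr₀] using hr₁

lemma coeffAt_two (f : ℂ → ℂ) : coeffAt f 2 = deriv (deriv f) 0 / 2 := by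
  simp [coeffAt, iteratedDeriv_succ]

lemma deriv_const_mul_comp_mul (μ c : ℂ) (f : ℂ → ℂ) (z : ℂ) :
    deriv (fun w => μ * f (c * w)) z = μ * c * deriv f (c * z) := by
  rw [deriv_const_mul_field, deriv_comp_mul_left, smul_eq_mul, mul_assoc]

lemma deriv_deriv_const_mul_comp_mul (μ c : ℂ) (f : ℂ → ℂ) (z : ℂ) :
    deriv (deriv fun w => μ * f (c * w)) z = μ * c ^ 2 * deriv (deriv f) (c * z) := by
  rw [funext (deriv_const_mul_comp_mul μ c f), deriv_const_mul_comp_mul]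
  ring

lemma deriv_deriv_comp {f φ : ℂ → ℂ} {z : ℂ} (hf : AnalyticAt ℂ f (φ z))
    (hφ : AnalyticAt ℂ φ z) :
    deriv (deriv fun w => f (φ w)) z =
      deriv (deriv f) (φ z) * deriv φ z ^ 2 + deriv f (φ z) * deriv (deriv φ) z := by
  have hev : deriv (fun w => f (φ w)) =ᶠ[𝓝 z] fun w => deriv f (φ w) * deriv φ w := by
    filter_upwards [hφ.eventually_analyticAt,
      hφ.continuousAt.eventually hf.eventually_analyticAt] with w hφw hfw
    exact (hfw.differentiableAt.hasDerivAt.comp w hφw.differentiableAt.hasDerivAt).deriv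
  have hcomp : HasDerivAt (fun w => deriv f (φ w)) (deriv (deriv f) (φ z) * deriv φ z) z :=
    hf.deriv.differentiableAt.hasDerivAt.comp z hφ.differentiableAt.hasDerivAt
  rw [hev.deriv_eq, (hcomp.fun_mul hφ.deriv.differentiableAt.hasDerivAt).deriv]
  ring

lemma mul_one_sub_div_one_add_le {Φ Φ' : ℝ → ℝ} {ρ : ℝ} (hρ₀ : 0 ≤ ρ) (hρ₁ : ρ < 1)
    (hΦ : ∀ r ∈ Icc 0 ρ, HasDerivAt Φ (Φ' r) r)
    (hΦ' : ∀ r ∈ Icc 0 ρ, -2 * Φ r ≤ (1 - r ^ 2) * Φ' r) :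
    Φ 0 * (1 - ρ) / (1 + ρ) ≤ Φ ρ := by
  have hψ : ∀ r ∈ Icc 0 ρ, HasDerivAt (fun t => Φ t * ((1 + t) / (1 - t)))
      (((1 - r ^ 2) * Φ' r + 2 * Φ r) / (1 - r) ^ 2) r := by
    intro r hr
    have hr₁ : 1 - r ≠ 0 := by linarith [hr.2]
    have hq := ((hasDerivAt_id r).const_add 1).fun_div ((hasDerivAt_id r).const_sub 1) hr₁
    refine ((hΦ r hr).fun_mul hq).congr_deriv ?_
    simp only [id]
    field_simp
    ring
  have hmono : MonotoneOn (fun t => Φ t * ((1 + t) / (1 - t))) (Icc 0 ρ) := by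
    refine monotoneOn_of_hasDerivWithinAt_nonneg (convex_Icc 0 ρ)
      (fun r hr => (hψ r hr).continuousAt.continuousWithinAt)
      (fun r hr => (hψ r (interior_subset hr)).hasDerivWithinAt) fun r hr => ?_
    have hr := interior_subset hr
    exact div_nonneg (by linarith [hΦ' r hr]) (sq_nonneg _)
  have h := hmono (left_mem_Icc.2 hρ₀) (right_mem_Icc.2 hρ₀) hρ₀
  simp only [add_zero, sub_zero, div_one, mul_one] at h
  rw [div_le_iff₀ (by linarith)]
  rw [mul_div_assoc', le_div_iff₀ (by linarith)] at h
  linarith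

lemma le_norm_of_forall_mem_sphere_le_norm {f : ℂ → ℂ} {ρ c : ℝ} (hρ : 0 < ρ)
    (hf : DifferentiableOn ℂ f (closedBall 0 ρ)) (hne : ∀ z ∈ closedBall 0 ρ, f z ≠ 0)
    (hc : ∀ z ∈ sphere 0 ρ, c ≤ ‖f z‖) : c ≤ ‖f 0‖ := by
  rcases le_or_gt c 0 with hc₀ | hc₀
  · exact hc₀.trans (norm_nonneg _)
  have hinv : DiffContOnCl ℂ (fun z => (f z)⁻¹) (ball 0 ρ) := by
    refine DifferentiableOn.diffContOnCl ?_
    rw [closure_ball 0 hρ.ne']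
    exact hf.inv hne
  have hbound : ∀ z ∈ frontier (ball (0 : ℂ) ρ), ‖(f z)⁻¹‖ ≤ c⁻¹ := by
    intro z hz
    rw [frontier_ball 0 hρ.ne'] at hz
    rw [norm_inv]
    exact inv_anti₀ hc₀ (hc z hz)
  have h := Complex.norm_le_of_forall_mem_frontier_norm_le isBounded_ball hinv hbound
    (subset_closure (mem_ball_self hρ))
  rw [norm_inv] at h
  have hf₀ : 0 < ‖f 0‖ := norm_pos_iff.2 (hne 0 (mem_closedBall_self hρ.le))
  exact (inv_le_inv₀ hf₀ hc₀).1 h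

def mobius (ζ z : ℂ) : ℂ := (z + ζ) / (1 + conj ζ * z)

lemma mobius_zero (ζ : ℂ) : mobius ζ 0 = ζ := by simp [mobius]

lemma analyticAt_mobius_zero (ζ : ℂ) : AnalyticAt ℂ (mobius ζ) 0 :=
  AnalyticAt.div (by fun_prop) (by fun_prop) (by simp)

lemma hasDerivAt_mobius {ζ z : ℂ} (hz : 1 + conj ζ * z ≠ 0) :
    HasDerivAt (mobius ζ) ((1 - (‖ζ‖ : ℂ) ^ 2) / (1 + conj ζ * z) ^ 2) z := by
  have hnum : HasDerivAt (fun w => w + ζ) 1 z := (hasDerivAt_id z).add_const ζ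
  have hden : HasDerivAt (fun w => 1 + conj ζ * w) (conj ζ) z := by
    simpa using ((hasDerivAt_id z).const_mul (conj ζ)).const_add 1
  refine (hnum.fun_div hden hz).congr_deriv ?_
  rw [← conj_mul']
  ring

lemma deriv_mobius_zero (ζ : ℂ) : deriv (mobius ζ) 0 = 1 - (‖ζ‖ : ℂ) ^ 2 := by
  simp [(hasDerivAt_mobius (ζ := ζ) (z := 0) (by simp)).deriv]

lemma deriv_deriv_mobius_zero (ζ : ℂ) :
    deriv (deriv (mobius ζ)) 0 = -2 * conj ζ * (1 - (‖ζ‖ : ℂ) ^ 2) := by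
  have hden : ∀ᶠ z in 𝓝 (0 : ℂ), 1 + conj ζ * z ≠ 0 :=
    (continuous_const.add (continuous_const.mul continuous_id)).continuousAt.eventually_ne
      (by simp)
  have hev : deriv (mobius ζ) =ᶠ[𝓝 0] fun z => (1 - (‖ζ‖ : ℂ) ^ 2) / (1 + conj ζ * z) ^ 2 := by
    filter_upwards [hden] with z hz
    exact (hasDerivAt_mobius hz).deriv
  have hsq : HasDerivAt (fun z => (1 + conj ζ * z) ^ 2) (2 * conj ζ) 0 := by
    simpa using (((hasDerivAt_id (0 : ℂ)).const_mul (conj ζ)).const_add 1).fun_pow 2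
  rw [hev.deriv_eq, ((hasDerivAt_const 0 _).fun_div hsq (by simp)).deriv]
  ring

def koebeMap (f : ℂ → ℂ) (ζ c : ℂ) (z : ℂ) : ℂ := (f (mobius ζ z) - f ζ) / c

lemma deriv_koebeMap (f : ℂ → ℂ) (ζ c : ℂ) :
    deriv (koebeMap f ζ c) = fun z => deriv (fun w => f (mobius ζ w)) z / c := by
  ext z
  rw [show koebeMap f ζ c = fun w => (f (mobius ζ w) - f ζ) / c from rfl, deriv_div_const,
    deriv_sub_const]

lemma deriv_koebeMap_zero {f : ℂ → ℂ} {ζ : ℂ} (hf : AnalyticAt ℂ f ζ) (c : ℂ) :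
    deriv (koebeMap f ζ c) 0 = deriv f ζ * (1 - (‖ζ‖ : ℂ) ^ 2) / c := by
  rw [← mobius_zero ζ] at hf
  have hcomp := hf.differentiableAt.hasDerivAt.comp 0
    (analyticAt_mobius_zero ζ).differentiableAt.hasDerivAt
  rw [mobius_zero, deriv_mobius_zero] at hcomp
  rw [deriv_koebeMap]
  exact congrArg (· / c) hcomp.deriv

lemma deriv_deriv_koebeMap_zero {f : ℂ → ℂ} {ζ : ℂ} (hf : AnalyticAt ℂ f ζ) (c : ℂ) :
    deriv (deriv (koebeMap f ζ c)) 0 =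
      (deriv (deriv f) ζ * (1 - (‖ζ‖ : ℂ) ^ 2) ^ 2
        - 2 * conj ζ * (1 - (‖ζ‖ : ℂ) ^ 2) * deriv f ζ) / c := by
  rw [← mobius_zero ζ] at hf
  rw [deriv_koebeMap, deriv_div_const, deriv_deriv_comp hf (analyticAt_mobius_zero ζ),
    deriv_mobius_zero, deriv_deriv_mobius_zero, mobius_zero]
  ring

def affineMap (P Q : ℂ → ℂ) (e d : ℂ) (z : ℂ) : ℂ := (P z - e * Q z) / d

lemma deriv_affineMap {P Q : ℂ → ℂ} {z : ℂ} (hP : DifferentiableAt ℂ P z)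
    (hQ : DifferentiableAt ℂ Q z) (e d : ℂ) :
    deriv (affineMap P Q e d) z = (deriv P z - e * deriv Q z) / d :=
  ((hP.hasDerivAt.sub (hQ.hasDerivAt.const_mul e)).div_const d).deriv

lemma deriv_deriv_affineMap {P Q : ℂ → ℂ} {z : ℂ} (hP : AnalyticAt ℂ P z)
    (hQ : AnalyticAt ℂ Q z) (e d : ℂ) :
    deriv (deriv (affineMap P Q e d)) z = (deriv (deriv P) z - e * deriv (deriv Q) z) / d := by
  have hev : deriv (affineMap P Q e d) =ᶠ[𝓝 z] fun w => (deriv P w - e * deriv Q w) / d := by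
    filter_upwards [hP.eventually_analyticAt, hQ.eventually_analyticAt] with w hPw hQw
    exact deriv_affineMap hPw.differentiableAt hQw.differentiableAt e d
  rw [hev.deriv_eq]
  exact deriv_affineMap hP.deriv.differentiableAt hQ.deriv.differentiableAt e d

/-- With `H₁, H₂, G₁, G₂` standing for `h'(ζ), h''(ζ), g'(ζ), g''(ζ)`, `s = 1 - |ζ|²` and
`w = conj ζ`, the left factor is `a₂` of the affine change with `ε = g'(ζ) / conj h'(ζ)` of the
Koebe transform of `h + conj g` at `ζ`. -/
lemma affine_koebe_coeff_two_mul_eq {s w H₁ H₂ G₁ G₂ : ℂ} (hs : s ≠ 0) (hH : H₁ ≠ 0)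
    (hD : conj H₁ * H₁ - conj G₁ * G₁ ≠ 0) :
    ((H₂ * s ^ 2 - 2 * w * s * H₁) / (s * H₁)
        - conj (G₁ / conj H₁) * ((G₂ * s ^ 2 - 2 * w * s * G₁) / (s * conj H₁)))
      / (1 - conj (G₁ / conj H₁) * (G₁ / conj H₁)) / 2
      * (2 * s * (conj H₁ * H₁ - conj G₁ * G₁))
    = s ^ 2 * (conj H₁ * H₂ - conj G₁ * G₂) - 2 * w * s * (conj H₁ * H₁ - conj G₁ * G₁) := by
  have hK : conj H₁ ≠ 0 := by simpa using hH
  simp only [map_div₀, Complex.conj_conj]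
  generalize conj H₁ = K at *
  generalize conj G₁ = L at *
  have hden : 1 - L / H₁ * (G₁ / K) = (K * H₁ - L * G₁) / (K * H₁) := by
    field_simp
  rw [hden]
  generalize hX : (H₂ * s ^ 2 - 2 * w * s * H₁) / (s * H₁)
    - L / H₁ * ((G₂ * s ^ 2 - 2 * w * s * G₁) / (s * K)) = X
  have hXval : X * (K * H₁) = s * (K * H₂ - L * G₂) - 2 * w * (K * H₁ - L * G₁) := by
    rw [← hX]
    field_simp
    ring
  generalize K * H₁ - L * G₁ = D at *
  field_simp
  linear_combination hXval

section Transforms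

variable (p : (ℂ → ℂ) × (ℂ → ℂ))

def koebeTransform (ζ : ℂ) : (ℂ → ℂ) × (ℂ → ℂ) :=
  (koebeMap p.1 ζ ((1 - (‖ζ‖ : ℂ) ^ 2) * deriv p.1 ζ),
    koebeMap p.2 ζ ((1 - (‖ζ‖ : ℂ) ^ 2) * conj (deriv p.1 ζ)))

def affineTransform (ε : ℂ) : (ℂ → ℂ) × (ℂ → ℂ) :=
  (affineMap p.1 p.2 (conj ε) (1 - conj ε * deriv p.2 0),
    affineMap p.2 p.1 ε (conj (1 - conj ε * deriv p.2 0)))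

def rotationTransform (u : ℂ) : (ℂ → ℂ) × (ℂ → ℂ) :=
  (fun z => conj u * p.1 (u * z), fun z => u * p.2 (u * z))

def jacobian (z : ℂ) : ℝ := ‖deriv p.1 z‖ ^ 2 - ‖deriv p.2 z‖ ^ 2

def scaledJacobian (r : ℝ) : ℝ := (1 - r ^ 2) ^ 2 * jacobian p r

lemma deriv_rotationTransform_fst (u z : ℂ) :
    deriv (rotationTransform p u).1 z = conj u * u * deriv p.1 (u * z) :=
  deriv_const_mul_comp_mul _ _ _ _

lemma deriv_rotationTransform_snd (u z : ℂ) :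
    deriv (rotationTransform p u).2 z = u * u * deriv p.2 (u * z) :=
  deriv_const_mul_comp_mul _ _ _ _

lemma coeffAt_two_rotationTransform_fst (u : ℂ) :
    coeffAt (rotationTransform p u).1 2 = conj u * u ^ 2 * coeffAt p.1 2 := by
  rw [coeffAt_two, coeffAt_two, rotationTransform, deriv_deriv_const_mul_comp_mul, mul_zero]
  ring

lemma scaledJacobian_rotationTransform {u : ℂ} (hu : ‖u‖ = 1) (r : ℝ) :
    scaledJacobian (rotationTransform p u) r = (1 - r ^ 2) ^ 2 * jacobian p (u * r) := by
  simp [scaledJacobian, jacobian, deriv_rotationTransform_fst, deriv_rotationTransform_snd, hu]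

variable {p}

lemma hasDerivAt_scaledJacobian {r : ℝ} (h₁ : AnalyticAt ℂ p.1 r) (h₂ : AnalyticAt ℂ p.2 r) :
    HasDerivAt (scaledJacobian p)
      (2 * ((1 - r ^ 2) ^ 2 * (inner ℝ (deriv p.1 r) (deriv (deriv p.1) r)
          - inner ℝ (deriv p.2 r) (deriv (deriv p.2) r))
        - 2 * r * (1 - r ^ 2) * jacobian p r)) r := by
  have hw : HasDerivAt (fun t : ℝ => (1 - t ^ 2) ^ 2) (2 * (1 - r ^ 2) * (-(2 * r))) r := by
    simpa using ((hasDerivAt_pow 2 r).const_sub 1).fun_pow 2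
  have hn₁ := (h₁.deriv.differentiableAt.hasDerivAt.comp_ofReal).norm_sq
  have hn₂ := (h₂.deriv.differentiableAt.hasDerivAt.comp_ofReal).norm_sq
  refine (hw.fun_mul (hn₁.fun_sub hn₂)).congr_deriv ?_
  simp only [jacobian]
  ring

end Transforms

namespace IsAffineLinearInvariantFamily

variable {F : Set ((ℂ → ℂ) × (ℂ → ℂ))} (hF : IsAffineLinearInvariantFamily F)
  {p : (ℂ → ℂ) × (ℂ → ℂ)} (hp : p ∈ F)
include hF hp

lemma koebeTransform_mem {ζ : ℂ} (hζ : ζ ∈ unitDisk) : koebeTransform p ζ ∈ F :=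
  hF.koebe_mem p hp ζ hζ

lemma affineTransform_mem {ε : ℂ} (hε : ε ∈ unitDisk) : affineTransform p ε ∈ F :=
  hF.affine_mem p hp ε hε

lemma rotationTransform_mem {u : ℂ} (hu : ‖u‖ = 1) : rotationTransform p u ∈ F :=
  hF.rot_mem p hp u hu

lemma analyticAt_fst {z : ℂ} (hz : z ∈ unitDisk) : AnalyticAt ℂ p.1 z :=
  (hF.nsph p hp).h_analytic.analyticAt (isOpen_unitDisk.mem_nhds hz)

lemma analyticAt_snd {z : ℂ} (hz : z ∈ unitDisk) : AnalyticAt ℂ p.2 z :=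
  (hF.nsph p hp).g_analytic.analyticAt (isOpen_unitDisk.mem_nhds hz)

lemma jacobian_pos {z : ℂ} (hz : z ∈ unitDisk) : 0 < jacobian p z := by
  have := (hF.nsph p hp).sense_preserving z hz
  rw [jacobian, sub_pos]
  gcongr

lemma neg_le_re_coeffAt_two {a : ℝ}
    (hmax : ∀ q ∈ F, deriv q.2 0 = 0 → (coeffAt q.1 2).re ≤ a) (hp₀ : deriv p.2 0 = 0) :
    -a ≤ (coeffAt p.1 2).re := by
  have h := hmax _ (hF.rotationTransform_mem hp (u := -1) (by simp))
    (by simp [deriv_rotationTransform_snd, hp₀])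
  rw [coeffAt_two_rotationTransform_fst] at h
  norm_num at h
  linarith

lemma exists_mem_coeffAt_two_mul_eq {ζ : ℂ} (hζ : ζ ∈ unitDisk) :
    ∃ q ∈ F, deriv q.2 0 = 0 ∧
      coeffAt q.1 2 * (2 * (1 - (‖ζ‖ : ℂ) ^ 2) * jacobian p ζ)
        = (1 - (‖ζ‖ : ℂ) ^ 2) ^ 2 * (conj (deriv p.1 ζ) * deriv (deriv p.1) ζ
            - conj (deriv p.2 ζ) * deriv (deriv p.2) ζ)
          - 2 * conj ζ * (1 - (‖ζ‖ : ℂ) ^ 2) * jacobian p ζ := by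
  have h0 : (0 : ℂ) ∈ unitDisk := by simp [unitDisk]
  have hk := hF.koebeTransform_mem hp hζ
  have hk₁ : deriv (koebeTransform p ζ).1 0 = 1 := (hF.nsph _ hk).dh_zero
  have hε : deriv (koebeTransform p ζ).2 0 ∈ unitDisk := by
    have := (hF.nsph _ hk).sense_preserving 0 h0
    rwa [hk₁, norm_one] at this
  have hs : (1 : ℂ) - (‖ζ‖ : ℂ) ^ 2 ≠ 0 := by
    norm_cast
    have : ‖ζ‖ < 1 := hζ
    nlinarith [norm_nonneg ζ]
  have hJ : (jacobian p ζ : ℂ)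
      = conj (deriv p.1 ζ) * deriv p.1 ζ - conj (deriv p.2 ζ) * deriv p.2 ζ := by
    simp [jacobian, conj_mul']
  have hε_eq : deriv (koebeTransform p ζ).2 0 = deriv p.2 ζ / conj (deriv p.1 ζ) := by
    rw [koebeTransform, deriv_koebeMap_zero (hF.analyticAt_snd hp hζ)]
    field_simp
  refine ⟨affineTransform (koebeTransform p ζ) (deriv (koebeTransform p ζ).2 0),
    hF.affineTransform_mem hk hε, ?_, ?_⟩
  · dsimp only [affineTransform]
    rw [deriv_affineMap (hF.analyticAt_snd hk h0).differentiableAt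
      (hF.analyticAt_fst hk h0).differentiableAt, hk₁, mul_one, sub_self, zero_div]
  · dsimp only [affineTransform]
    rw [coeffAt_two, deriv_deriv_affineMap (hF.analyticAt_fst hk h0) (hF.analyticAt_snd hk h0),
      hε_eq, koebeTransform, deriv_deriv_koebeMap_zero (hF.analyticAt_fst hp hζ),
      deriv_deriv_koebeMap_zero (hF.analyticAt_snd hp hζ), hJ]
    refine affine_koebe_coeff_two_mul_eq hs ((hF.nsph p hp).dh_ne ζ hζ) ?_
    exact hJ ▸ ofReal_ne_zero.2 (hF.jacobian_pos hp hζ).ne'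

lemma exists_mem_hasDerivAt_scaledJacobian {r : ℝ} (hr₀ : 0 ≤ r) (hr₁ : r < 1) :
    ∃ q ∈ F, deriv q.2 0 = 0 ∧ HasDerivAt (scaledJacobian p)
      (4 * (coeffAt q.1 2).re * scaledJacobian p r / (1 - r ^ 2)) r := by
  have hr := ofReal_mem_unitDisk hr₀ hr₁
  obtain ⟨q, hq, hq₀, hid⟩ := hF.exists_mem_coeffAt_two_mul_eq hp hr
  refine ⟨q, hq, hq₀, (hasDerivAt_scaledJacobian (hF.analyticAt_fst hp hr)
    (hF.analyticAt_snd hp hr)).congr_deriv ?_⟩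
  have hcast₁ : 2 * (1 - (r : ℂ) ^ 2) * jacobian p r
      = ((2 * (1 - r ^ 2) * jacobian p r : ℝ) : ℂ) := by
    push_cast; ring
  have hcast₂ : (1 - (r : ℂ) ^ 2) ^ 2 = (((1 - r ^ 2) ^ 2 : ℝ) : ℂ) := by push_cast; ring
  have hcast₃ : 2 * (r : ℂ) * (1 - (r : ℂ) ^ 2) * jacobian p r
      = ((2 * r * (1 - r ^ 2) * jacobian p r : ℝ) : ℂ) := by
    push_cast; ring
  rw [norm_real, Real.norm_of_nonneg hr₀, conj_ofReal, hcast₁, hcast₂, hcast₃] at hid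
  have hre := congrArg Complex.re hid
  simp only [re_mul_ofReal, re_ofReal_mul, sub_re, ofReal_re] at hre
  have hs : 1 - r ^ 2 ≠ 0 := by nlinarith
  simp only [scaledJacobian, Complex.inner, mul_comm (deriv (deriv _) _)]
  rw [eq_div_iff hs]
  linear_combination (-2 * (1 - r ^ 2)) * hre

lemma mul_one_sub_div_one_add_le_scaledJacobian
    (hlow : ∀ q ∈ F, deriv q.2 0 = 0 → -(1 / 2) ≤ (coeffAt q.1 2).re)
    {ρ : ℝ} (hρ₀ : 0 ≤ ρ) (hρ₁ : ρ < 1) :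
    scaledJacobian p 0 * (1 - ρ) / (1 + ρ) ≤ scaledJacobian p ρ := by
  have hderiv := fun r (hr : r ∈ Icc 0 ρ) =>
    hF.exists_mem_hasDerivAt_scaledJacobian hp hr.1 (hr.2.trans_lt hρ₁)
  refine mul_one_sub_div_one_add_le hρ₀ hρ₁ (Φ' := deriv (scaledJacobian p)) (fun r hr => ?_)
    fun r hr => ?_
  · obtain ⟨q, -, -, hd⟩ := hderiv r hr
    exact hd.differentiableAt.hasDerivAt
  · obtain ⟨q, hq, hq₀, hd⟩ := hderiv r hr
    have hr₁ : r < 1 := hr.2.trans_lt hρ₁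
    have hs : 0 < 1 - r ^ 2 := by nlinarith [hr.1]
    have hJ := (hF.jacobian_pos hp (ofReal_mem_unitDisk hr.1 hr₁)).le
    rw [hd.deriv, mul_div_cancel₀ _ hs.ne', scaledJacobian]
    nlinarith [hlow q hq hq₀, mul_nonneg (sq_nonneg (1 - r ^ 2)) hJ]

lemma one_sub_div_one_add_le_norm_deriv_sq
    (hlow : ∀ q ∈ F, deriv q.2 0 = 0 → -(1 / 2) ≤ (coeffAt q.1 2).re)
    (hp₀ : deriv p.2 0 = 0) {u : ℂ} (hu : ‖u‖ = 1) {r : ℝ} (hr₀ : 0 ≤ r) (hr₁ : r < 1) :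
    (1 - r) / (1 + r) ≤ (1 - r ^ 2) ^ 2 * ‖deriv p.1 (u * r)‖ ^ 2 := by
  have h := hF.mul_one_sub_div_one_add_le_scaledJacobian (hF.rotationTransform_mem hp hu) hlow
    hr₀ hr₁
  simp only [scaledJacobian_rotationTransform p hu, jacobian, ofReal_zero, mul_zero,
    (hF.nsph p hp).dh_zero, hp₀] at h
  norm_num at h
  nlinarith [norm_nonneg (deriv p.2 (u * r)), sq_nonneg (1 - r ^ 2)]

end IsAffineLinearInvariantFamily

theorem second_coefficient_maximizer_gt_half_general
    (F : Set ((ℂ → ℂ) × (ℂ → ℂ))) (hF : IsAffineLinearInvariantFamily F)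
    (h₀ g₀ : ℂ → ℂ) (hmem : (h₀, g₀) ∈ F) (hg₀0 : deriv g₀ 0 = 0)
    (hmax : ∀ h g : ℂ → ℂ, (h, g) ∈ F → deriv g 0 = 0 →
      (coeffAt h 2).re ≤ (coeffAt h₀ 2).re ∧ (coeffAt g 2).re ≤ (coeffAt g₀ 2).re) :
    1 / 2 < (coeffAt h₀ 2).re := by
  by_contra! ha
  have hlow : ∀ q ∈ F, deriv q.2 0 = 0 → -(1 / 2) ≤ (coeffAt q.1 2).re := fun q hq hq₀ =>
    (neg_le_neg ha).trans
      (hF.neg_le_re_coeffAt_two hq (fun q' hq' hq'₀ => (hmax _ _ hq' hq'₀).1) hq₀)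
  have hsphere : ∀ z ∈ sphere (0 : ℂ) (9 / 10), 11 / 10 ≤ ‖deriv h₀ z‖ := by
    intro z hz
    rw [mem_sphere_zero_iff_norm] at hz
    have hz' : z / (9 / 10 : ℝ) * (9 / 10 : ℝ) = z := by field_simp
    have h := hF.one_sub_div_one_add_le_norm_deriv_sq hmem hlow hg₀0
      (u := z / (9 / 10 : ℝ)) (by simp [hz]) (r := 9 / 10) (by norm_num) (by norm_num)
    rw [hz'] at h
    nlinarith [norm_nonneg (deriv h₀ z)]
  have hdisk : closedBall (0 : ℂ) (9 / 10) ⊆ unitDisk := fun z hz =>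
    (mem_closedBall_zero_iff.1 hz).trans_lt (by norm_num)
  have h := le_norm_of_forall_mem_sphere_le_norm (by norm_num)
    (fun z hz => (hF.analyticAt_fst hmem (hdisk hz)).deriv.differentiableAt.differentiableWithinAt)
    (fun z hz => (hF.nsph _ hmem).dh_ne z (hdisk hz)) hsphere
  rw [(hF.nsph _ hmem).dh_zero, norm_one] at h
  norm_num at h

/-- If `f₀ = h₀ + conj g₀` in `F_H⁰` simultaneously maximizes `Re a_2(h)` and `Re b_2(g)`
over all `f = h + conj g ∈ F_H⁰` (the maximal values being real), then
`a_2(h₀) > 1/2`. -/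
theorem second_coefficient_maximizer_gt_half
    (F : Set ((ℂ → ℂ) × (ℂ → ℂ))) (hF : IsAffineLinearInvariantFamily F)
    (h₀ g₀ : ℂ → ℂ) (hmem : (h₀, g₀) ∈ F) (hg₀0 : deriv g₀ 0 = 0)
    (ha2real : (coeffAt h₀ 2).im = 0) (hb2real : (coeffAt g₀ 2).im = 0)
    (hmax : ∀ h g : ℂ → ℂ, (h, g) ∈ F → deriv g 0 = 0 →
      (coeffAt h 2).re ≤ (coeffAt h₀ 2).re ∧ (coeffAt g 2).re ≤ (coeffAt g₀ 2).re) :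
    1 / 2 < (coeffAt h₀ 2).re :=
  second_coefficient_maximizer_gt_half_general F hF h₀ g₀ hmem hg₀0 hmax
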